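/- μ = 1 case of Theorem 9: let n, k be positive integers with n ≥ 2k − 1, and let G_0, G_1 ∈ F_q^{k×n} be such that all non-trivially-zero full-size (2k × 2k) minors of the block matrices [[G_0, G_1],[0, G_0]] and [[G_1, G_0],[0, G_1]] are nonzero, and all full-size (k × 2n) minors of [G_0 G_1] are nonzero. Then for every nonzero u(z) ∈ F_q[z]^k, wt(u(z)(G_0 + G_1 z)) ≥ 2n − k + 1. -/

import Mathlib

/-- A full-size minor (given by the column selection `f`) of `A` is trivially zero if,
replacing nonzero entries by independent indeterminates, the determinant is the zero
polynomial; equivalently every permutation product contains a zero entry of `A`. -/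
def IsTrivZero {F : Type*} [Zero F] {ι κ : Type*} [Fintype ι] [DecidableEq ι]
    (A : Matrix ι κ F) (f : ι ↪ κ) : Prop :=
  ∀ σ : Equiv.Perm ι, ∃ i, A i (f (σ i)) = 0

/-- The block matrix `[[A, B], [0, A]]`. -/
def blockT {F : Type*} [Zero F] {k n : ℕ} (A B : Matrix (Fin k) (Fin n) F) :
    Matrix (Fin 2 × Fin k) (Fin 2 × Fin n) F :=
  fun p q =>
    if p.1 = 0 then (if q.1 = 0 then A p.2 q.2 else B p.2 q.2)
    else (if q.1 = 0 then 0 else A p.2 q.2)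

open Finset Matrix Polynomial

section AuxST9



variable {F : Type*} [Field F]

lemma fin2cases (x : Fin 2) : x = 0 ∨ x = 1 := by
  fin_cases x <;> simp

lemma vecMul_eq_zero_of_det {ι : Type*} [Fintype ι] [DecidableEq ι]
    (M : Matrix ι ι F) (hdet : M.det ≠ 0) {x : ι → F}
    (hx : Matrix.vecMul x M = 0) : x = 0 := by
  have hu : IsUnit M.det := isUnit_iff_ne_zero.mpr hdet
  calc x = x ᵥ* (M * M⁻¹) := by rw [Matrix.mul_nonsing_inv _ hu, Matrix.vecMul_one]
  _ = (x ᵥ* M) ᵥ* M⁻¹ := (Matrix.vecMul_vecMul _ _ _).symm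
  _ = 0 := by rw [hx, Matrix.zero_vecMul]

lemma kill {ι κ : Type*} [Fintype ι] [DecidableEq ι] [Fintype κ] [DecidableEq κ]
    (H : Matrix ι κ F)
    (hH : ∀ g : ι ↪ κ, (H.submatrix id g).det ≠ 0)
    (x : ι → F) (S : Finset κ) (hcard : Fintype.card ι ≤ S.card)
    (hzero : ∀ s ∈ S, ∑ i, x i * H i s = 0) : x = 0 := by
  obtain ⟨S', hsub, hS'⟩ := Finset.exists_subset_card_eq (s := S) hcard
  let e : ι ↪ κ :=
    (((Fintype.equivFin ι).trans (Finset.equivFinOfCardEq hS').symm).toEmbedding).trans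
      (Function.Embedding.subtype _)
  have hmem : ∀ i, e i ∈ S := by
    intro i
    exact hsub (((Fintype.equivFin ι).trans (Finset.equivFinOfCardEq hS').symm) i).2
  apply vecMul_eq_zero_of_det _ (hH e)
  funext q
  have := hzero (e q) (hmem q)
  simpa [Matrix.vecMul, dotProduct] using this

lemma no_zero_block [Fintype F] {m : ℕ} (M : Matrix (Fin m) (Fin m) F) (hdet : M.det ≠ 0)
    (A P : Finset (Fin m)) (hz : ∀ i ∈ A, ∀ j ∈ P, M i j = 0) :
    A.card + P.card ≤ m := by
  classical
  set ex : (P → F) → (Fin m → F) := fun c j => if h : j ∈ P then c ⟨j, h⟩ else 0 with hex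
  have key : ∀ (c : P → F), ∀ i ∈ A, M.mulVec (ex c) i = 0 := by
    intro c i hi
    simp only [Matrix.mulVec, dotProduct]
    apply Finset.sum_eq_zero
    intro j _
    by_cases hj : j ∈ P
    · rw [hz i hi j hj, zero_mul]
    · simp [hex, hj]
  have hinj : Function.Injective
      (fun c : (P → F) => fun r : (Aᶜ : Finset (Fin m)) => (M.mulVec (ex c)) r.1) := by
    intro c c' h
    have hall : M.mulVec (ex c) = M.mulVec (ex c') := by
      funext i
      by_cases hiA : i ∈ A
      · rw [key c i hiA, key c' i hiA]
      · exact congrFun h (⟨i, by simpa using hiA⟩ : (Aᶜ : Finset (Fin m)))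
    have hext_eq : ex c = ex c' := by
      have h2 : M⁻¹.mulVec (M.mulVec (ex c)) = M⁻¹.mulVec (M.mulVec (ex c')) := by rw [hall]
      simpa [Matrix.mulVec_mulVec, Matrix.nonsing_inv_mul _ (isUnit_iff_ne_zero.mpr hdet),
        Matrix.one_mulVec] using h2
    funext p
    have := congrFun hext_eq p.1
    simpa [hex, p.2] using this
  have hcard := Fintype.card_le_of_injective _ hinj
  rw [Fintype.card_fun, Fintype.card_fun, Fintype.card_coe, Fintype.card_coe] at hcard
  have hq : 1 < Fintype.card F := Fintype.one_lt_card
  have hPA : P.card ≤ (Aᶜ : Finset (Fin m)).card := (Nat.pow_le_pow_iff_right hq).mp hcard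
  have hAc : (Aᶜ : Finset (Fin m)).card = m - A.card := by
    rw [Finset.card_compl]; simp
  have hAm : A.card ≤ m := by
    simpa using Finset.card_le_card (A.subset_univ)
  omega

lemma colcount [Fintype F] [DecidableEq F] {k n : ℕ} (hkn : k ≤ n) (H : Matrix (Fin k) (Fin n) F)
    (hH : ∀ g : Fin k ↪ Fin n, (H.submatrix id g).det ≠ 0)
    (A : Finset (Fin k)) (hA : A.Nonempty) :
    (univ.filter fun s : Fin n => ∀ i ∈ A, H i s = 0).card + A.card ≤ k := by
  classical
  by_contra hcon
  push_neg at hcon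
  set bad := (univ.filter fun s : Fin n => ∀ i ∈ A, H i s = 0) with hbad
  have hα1 : 1 ≤ A.card := hA.card_pos
  have hαk : A.card ≤ k := by simpa using Finset.card_le_card (A.subset_univ)
  have hD : k + 1 - A.card ≤ bad.card := by omega
  obtain ⟨D, hDbad, hDcard⟩ := Finset.exists_subset_card_eq (s := bad) hD
  obtain ⟨E, hDE, hEcard⟩ := Finset.exists_superset_card_eq
    (s := D) (n := k) (by omega) (by simpa using hkn)
  set g : Fin k ≃o E := E.orderIsoOfFin hEcard with hg
  set g' : Fin k ↪ Fin n := g.toEquiv.toEmbedding.trans (Function.Embedding.subtype _) with hg'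
  set M := H.submatrix id g' with hM
  set P : Finset (Fin k) := univ.filter (fun j => (g' j : Fin n) ∈ D) with hP
  have hPcard : P.card = D.card := by
    apply Finset.card_bij (fun j _ => g' j)
    · intro j hj; exact (mem_filter.mp hj).2
    · intro j1 h1 j2 h2 heq; exact g'.injective heq
    · intro d hd
      refine ⟨g.symm ⟨d, hDE hd⟩, ?_, ?_⟩
      · refine mem_filter.mpr ⟨mem_univ _, ?_⟩
        have : g' (g.symm ⟨d, hDE hd⟩) = d := by
          simp [hg']
        rw [this]; exact hd
      · simp [hg']
  have hzb : ∀ i ∈ A, ∀ j ∈ P, M i j = 0 := by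
    intro i hi j hj
    have h1 : (g' j : Fin n) ∈ bad := hDbad (mem_filter.mp hj).2
    exact (mem_filter.mp h1).2 i hi
  have := no_zero_block M (hH g') A P hzb
  omega

lemma card_split {γ : Type*} [Fintype γ] [DecidableEq γ] (S : Finset (Fin 2 × γ)) :
    S.card = (univ.filter fun j : γ => ((0 : Fin 2), j) ∈ S).card
      + (univ.filter fun j : γ => ((1 : Fin 2), j) ∈ S).card := by
  have h1 : S.card = ∑ q : Fin 2 × γ, if q ∈ S then 1 else 0 := by
    simp [Finset.sum_ite_mem]
  rw [h1, Fintype.sum_prod_type, Fin.sum_univ_two, Finset.card_filter, Finset.card_filter]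

lemma sum_support_ge [DecidableEq F] {n : ℕ} (v : Fin n → Polynomial F) (T' : Finset ℕ) :
    (∑ t ∈ T', (univ.filter (fun j => ¬ ((v j).coeff t = 0))).card) ≤ ∑ j, (v j).support.card := by
  classical
  calc (∑ t ∈ T', (univ.filter (fun j => ¬ ((v j).coeff t = 0))).card)
      = ∑ t ∈ T', ∑ j, (if ¬ ((v j).coeff t = 0) then 1 else 0) := by
        refine Finset.sum_congr rfl (fun t _ => ?_)
        rw [Finset.card_filter]
    _ = ∑ j, ∑ t ∈ T', (if ¬ ((v j).coeff t = 0) then 1 else 0) := Finset.sum_comm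
    _ = ∑ j, (T'.filter (fun t => ¬ ((v j).coeff t = 0))).card := by
        refine Finset.sum_congr rfl (fun j _ => ?_)
        rw [Finset.card_filter]
    _ ≤ ∑ j, (v j).support.card := by
        refine Finset.sum_le_sum (fun j _ => ?_)
        apply Finset.card_le_card
        intro t htm
        exact Polynomial.mem_support_iff.mpr (mem_filter.mp htm).2



end AuxST9

section PairST9
variable {F : Type*} [Field F] [Fintype F] [DecidableEq F]

lemma pairLemma {k n : ℕ} (hk : 0 < k) (hkn : k ≤ n)
    (G0 G1 : Matrix (Fin k) (Fin n) F)
    (hG0 : ∀ g : Fin k ↪ Fin n, (G0.submatrix id g).det ≠ 0)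
    (hG1 : ∀ g : Fin k ↪ Fin n, (G1.submatrix id g).det ≠ 0)
    (hM1 : ∀ f : (Fin 2 × Fin k) ↪ (Fin 2 × Fin n),
      ¬ IsTrivZero (blockT G0 G1) f → ((blockT G0 G1).submatrix id f).det ≠ 0)
    (a b : Fin k → F) (ha : a ≠ 0) :
    (univ.filter fun s : Fin n => (∑ i, a i * G0 i s) = 0).card +
    (univ.filter fun s : Fin n => (∑ i, (a i * G1 i s + b i * G0 i s)) = 0).card + 1 ≤ 2 * k := by
  by_contra hcon
  push_neg at hcon
  set Z0 := univ.filter fun s : Fin n => (∑ i, a i * G0 i s) = 0 with hZ0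
  set Z1 := univ.filter fun s : Fin n => (∑ i, (a i * G1 i s + b i * G0 i s)) = 0 with hZ1
  have hz0k : Z0.card + 1 ≤ k := by
    by_contra h
    push_neg at h
    have hkle : k ≤ Z0.card := by omega
    exact ha (kill G0 hG0 a Z0 (by simpa using hkle) (fun s hs => (mem_filter.mp hs).2))
  set T := blockT G0 G1 with hT
  set C : Finset (Fin 2 × Fin n) := univ.filter (fun q =>
    (if q.1 = 0 then (∑ i, a i * G0 i q.2) else (∑ i, (a i * G1 i q.2 + b i * G0 i q.2))) = 0)
    with hC
  set t : Fin 2 × Fin k → Finset (Fin 2 × Fin n) := fun p => C.filter (fun q => T p q ≠ 0) with ht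
  have hall : ∀ s : Finset (Fin 2 × Fin k), s.card ≤ (s.biUnion t).card := by
    intro s
    set A := univ.filter (fun i : Fin k => ((0 : Fin 2), i) ∈ s) with hA
    set B := univ.filter (fun i : Fin k => ((1 : Fin 2), i) ∈ s) with hB
    set N := s.biUnion t with hN
    have hsplit_s : s.card = A.card + B.card := card_split s
    have hsplit_N : N.card = (univ.filter fun j : Fin n => ((0 : Fin 2), j) ∈ N).card
      + (univ.filter fun j : Fin n => ((1 : Fin 2), j) ∈ N).card := card_split N
    have hclaim0 : Z0.card ≤ (univ.filter fun j : Fin n => ((0 : Fin 2), j) ∈ N).card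
        + (univ.filter fun j : Fin n => ∀ i ∈ A, G0 i j = 0).card := by
      refine le_trans (card_le_card ?_) (card_union_le _ _)
      intro j hj
      by_cases hbadj : ∀ i ∈ A, G0 i j = 0
      · exact mem_union_right _ (mem_filter.mpr ⟨mem_univ _, hbadj⟩)
      · push_neg at hbadj
        obtain ⟨i, hiA, hne⟩ := hbadj
        refine mem_union_left _ (mem_filter.mpr ⟨mem_univ _, ?_⟩)
        refine mem_biUnion.mpr ⟨(0, i), (mem_filter.mp hiA).2, ?_⟩
        refine mem_filter.mpr ⟨mem_filter.mpr ⟨mem_univ _, ?_⟩, ?_⟩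
        · simpa using (mem_filter.mp hj).2
        · simpa [hT, blockT] using hne
    have hclaim1B : Z1.card ≤ (univ.filter fun j : Fin n => ((1 : Fin 2), j) ∈ N).card
        + (univ.filter fun j : Fin n => ∀ i ∈ B, G0 i j = 0).card := by
      refine le_trans (card_le_card ?_) (card_union_le _ _)
      intro j hj
      by_cases hbadj : ∀ i ∈ B, G0 i j = 0
      · exact mem_union_right _ (mem_filter.mpr ⟨mem_univ _, hbadj⟩)
      · push_neg at hbadj
        obtain ⟨i, hiB, hne⟩ := hbadj
        refine mem_union_left _ (mem_filter.mpr ⟨mem_univ _, ?_⟩)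
        refine mem_biUnion.mpr ⟨(1, i), (mem_filter.mp hiB).2, ?_⟩
        refine mem_filter.mpr ⟨mem_filter.mpr ⟨mem_univ _, ?_⟩, ?_⟩
        · simpa using (mem_filter.mp hj).2
        · simpa [hT, blockT] using hne
    have hclaim1A : Z1.card ≤ (univ.filter fun j : Fin n => ((1 : Fin 2), j) ∈ N).card
        + (univ.filter fun j : Fin n => ∀ i ∈ A, G1 i j = 0).card := by
      refine le_trans (card_le_card ?_) (card_union_le _ _)
      intro j hj
      by_cases hbadj : ∀ i ∈ A, G1 i j = 0
      · exact mem_union_right _ (mem_filter.mpr ⟨mem_univ _, hbadj⟩)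
      · push_neg at hbadj
        obtain ⟨i, hiA, hne⟩ := hbadj
        refine mem_union_left _ (mem_filter.mpr ⟨mem_univ _, ?_⟩)
        refine mem_biUnion.mpr ⟨(0, i), (mem_filter.mp hiA).2, ?_⟩
        refine mem_filter.mpr ⟨mem_filter.mpr ⟨mem_univ _, ?_⟩, ?_⟩
        · simpa using (mem_filter.mp hj).2
        · simpa [hT, blockT] using hne
    rcases A.eq_empty_or_nonempty with hAe | hAne
    · rcases B.eq_empty_or_nonempty with hBe | hBne
      · have h1 : A.card = 0 := by simp [hAe]
        have h2 : B.card = 0 := by simp [hBe]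
        omega
      · have h2 := colcount hkn G0 hG0 B hBne
        have h1 : A.card = 0 := by simp [hAe]
        omega
    · have h1 := colcount hkn G0 hG0 A hAne
      have h3 := colcount hkn G1 hG1 A hAne
      rcases B.eq_empty_or_nonempty with hBe | hBne
      · have h2 : B.card = 0 := by simp [hBe]
        omega
      · have h2 := colcount hkn G0 hG0 B hBne
        omega
  obtain ⟨f, hfinj, hfmem⟩ := (Finset.all_card_le_biUnion_card_iff_exists_injective t).mp hall
  have hnotriv : ¬ IsTrivZero T (⟨f, hfinj⟩ : (Fin 2 × Fin k) ↪ (Fin 2 × Fin n)) := by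
    intro h
    obtain ⟨p, hp⟩ := h 1
    have hmem := (mem_filter.mp (hfmem p)).2
    simp only [Equiv.Perm.one_apply] at hp
    exact hmem (by simpa using hp)
  have hdet := hM1 ⟨f, hfinj⟩ hnotriv
  let femb : (Fin 2 × Fin k) ↪ (Fin 2 × Fin n) := ⟨f, hfinj⟩
  set x : Fin 2 × Fin k → F := fun p => if p.1 = 0 then a p.2 else b p.2 with hx
  have hxz : x ᵥ* (T.submatrix id femb) = 0 := by
    funext q
    have hfC : f q ∈ C := mem_of_mem_filter _ (hfmem q)
    have hCval := (mem_filter.mp hfC).2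
    have hsum : (x ᵥ* (T.submatrix id femb)) q
        = (∑ i, a i * T (0, i) (f q)) + (∑ i, b i * T (1, i) (f q)) := by
      simp only [Matrix.vecMul, dotProduct, Matrix.submatrix_apply]
      rw [Fintype.sum_prod_type, Fin.sum_univ_two]
      simp only [hx]
      rfl
    rcases fin2cases (f q).1 with h0 | h1
    · have e0 : ∀ i, T (0, i) (f q) = G0 i (f q).2 := by
        intro i; simp [hT, blockT, h0]
      have e1 : ∀ i, T ((1 : Fin 2), i) (f q) = 0 := by
        intro i; simp [hT, blockT, h0]
      rw [hsum]
      simp only [e0, e1, mul_zero, Finset.sum_const_zero, add_zero]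
      rw [h0] at hCval
      simpa using hCval
    · have e0 : ∀ i, T (0, i) (f q) = G1 i (f q).2 := by
        intro i; simp [hT, blockT, h1]
      have e1 : ∀ i, T ((1 : Fin 2), i) (f q) = G0 i (f q).2 := by
        intro i
        have : ((1 : Fin 2) = 0) = False := by simp
        simp [hT, blockT, h1]
      rw [hsum]
      simp only [e0, e1]
      rw [h1] at hCval
      simp only [Pi.zero_apply]
      have : (∑ i, (a i * G1 i (f q).2 + b i * G0 i (f q).2)) = 0 := by simpa using hCval
      rw [← Finset.sum_add_distrib] at *
      simpa using this
  have hx0 := vecMul_eq_zero_of_det _ hdet hxz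
  apply ha
  funext i
  have := congrFun hx0 ((0 : Fin 2), i)
  simpa [hx] using this


end PairST9

theorem stmt9 {F : Type*} [Field F] [Fintype F] {k n : ℕ} (hk : 0 < k)
    (hn : 2 * k - 1 ≤ n)
    (G0 G1 : Matrix (Fin k) (Fin n) F)
    (hM1 : ∀ f : (Fin 2 × Fin k) ↪ (Fin 2 × Fin n),
      ¬ IsTrivZero (blockT G0 G1) f → ((blockT G0 G1).submatrix id f).det ≠ 0)
    (hM2 : ∀ f : (Fin 2 × Fin k) ↪ (Fin 2 × Fin n),
      ¬ IsTrivZero (blockT G1 G0) f → ((blockT G1 G0).submatrix id f).det ≠ 0)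
    (hcat : ∀ f : Fin k ↪ (Fin 2 × Fin n),
      ((Matrix.of fun (i : Fin k) (q : Fin 2 × Fin n) =>
        if q.1 = 0 then G0 i q.2 else G1 i q.2).submatrix id f).det ≠ 0)
    (u : Fin k → Polynomial F) (hu : u ≠ 0) :
    2 * n - k + 1 ≤ ∑ j : Fin n,
      (∑ i : Fin k, u i * (Polynomial.C (G0 i j) + Polynomial.C (G1 i j) * Polynomial.X)).support.card := by
  classical
  have hkn : k ≤ n := by omega
  have hG0 : ∀ g : Fin k ↪ Fin n, (G0.submatrix id g).det ≠ 0 := by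
    intro g
    have h := hcat (g.trans ⟨fun s => ((0 : Fin 2), s), fun s1 s2 h12 => by
      simpa [Prod.ext_iff] using h12⟩)
    have heq : ((Matrix.of fun (i : Fin k) (q : Fin 2 × Fin n) =>
        if q.1 = 0 then G0 i q.2 else G1 i q.2).submatrix id
        (g.trans ⟨fun s => ((0 : Fin 2), s), fun s1 s2 h12 => by
          simpa [Prod.ext_iff] using h12⟩)) = G0.submatrix id g := by
      ext i j
      simp [Matrix.submatrix_apply, Function.Embedding.coeFn_mk]
      exact if_pos rfl
    rwa [heq] at h
  have hG1 : ∀ g : Fin k ↪ Fin n, (G1.submatrix id g).det ≠ 0 := by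
    intro g
    have h := hcat (g.trans ⟨fun s => ((1 : Fin 2), s), fun s1 s2 h12 => by
      simpa [Prod.ext_iff] using h12⟩)
    have heq : ((Matrix.of fun (i : Fin k) (q : Fin 2 × Fin n) =>
        if q.1 = 0 then G0 i q.2 else G1 i q.2).submatrix id
        (g.trans ⟨fun s => ((1 : Fin 2), s), fun s1 s2 h12 => by
          simpa [Prod.ext_iff] using h12⟩)) = G1.submatrix id g := by
      ext i j
      simp [Matrix.submatrix_apply, Function.Embedding.coeFn_mk]
      exact if_neg (show (1 : Fin 2) ≠ 0 by decide)
    rwa [heq] at h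
  set c : ℕ → Fin k → F := fun s i => (u i).coeff s with hc
  have hterm : ∀ (p : Polynomial F) (g0 g1 : F) (s : ℕ),
      (p * (Polynomial.C g0 + Polynomial.C g1 * Polynomial.X)).coeff s
      = p.coeff s * g0 + (if 1 ≤ s then p.coeff (s - 1) * g1 else 0) := by
    intro p g0 g1 s
    rw [mul_add, Polynomial.coeff_add, Polynomial.coeff_mul_C, ← mul_assoc]
    congr 1
    rw [← pow_one (Polynomial.X (R := F)), Polynomial.coeff_mul_X_pow']
    split_ifs with h
    · rw [Polynomial.coeff_mul_C]
    · rfl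
  have hvco0 : ∀ j : Fin n,
      (∑ i : Fin k, u i * (Polynomial.C (G0 i j) + Polynomial.C (G1 i j) * Polynomial.X)).coeff 0
      = ∑ i, c 0 i * G0 i j := by
    intro j
    rw [Polynomial.finset_sum_coeff]
    refine Finset.sum_congr rfl (fun i _ => ?_)
    rw [hterm]
    simp [hc]
  have hvcoS : ∀ (j : Fin n) (s : ℕ),
      (∑ i : Fin k, u i * (Polynomial.C (G0 i j) + Polynomial.C (G1 i j) * Polynomial.X)).coeff (s + 1)
      = (∑ i, c (s + 1) i * G0 i j) + ∑ i, c s i * G1 i j := by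
    intro j s
    rw [Polynomial.finset_sum_coeff, ← Finset.sum_add_distrib]
    refine Finset.sum_congr rfl (fun i _ => ?_)
    rw [hterm]
    simp [hc]
  have hune : ∃ i, u i ≠ 0 := by
    by_contra h
    push_neg at h
    exact hu (funext h)
  set Tset := (Finset.range ((univ.sup fun i => (u i).natDegree) + 1)).filter (fun s => c s ≠ 0)
    with hTset
  have hTne : Tset.Nonempty := by
    obtain ⟨i, hi⟩ := hune
    obtain ⟨s, hs⟩ : ∃ s, (u i).coeff s ≠ 0 := by
      by_contra h
      push_neg at h
      exact hi (Polynomial.ext fun s => by simp [h s])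
    refine ⟨s, mem_filter.mpr ⟨mem_range.mpr ?_, ?_⟩⟩
    · exact Nat.lt_succ_of_le (le_trans (Polynomial.le_natDegree_of_ne_zero hs)
        (Finset.le_sup (f := fun i => (u i).natDegree) (mem_univ i)))
    · intro h
      exact hs (by simpa [hc] using congrFun h i)
  obtain ⟨m, hmmem, hmmin⟩ : ∃ m, m ∈ Tset ∧ ∀ t ∈ Tset, m ≤ t :=
    ⟨Tset.min' hTne, Tset.min'_mem hTne, fun t ht => Tset.min'_le t ht⟩
  obtain ⟨d, hdmem, hdmax⟩ : ∃ d, d ∈ Tset ∧ ∀ t ∈ Tset, t ≤ d :=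
    ⟨Tset.max' hTne, Tset.max'_mem hTne, fun t ht => Tset.le_max' t ht⟩
  have hcm : c m ≠ 0 := (mem_filter.mp hmmem).2
  have hcd : c d ≠ 0 := (mem_filter.mp hdmem).2
  have hmd : m ≤ d := hmmin d hdmem
  have hmemT : ∀ s : ℕ, c s ≠ 0 → s ∈ Tset := by
    intro s hs
    obtain ⟨i, hi⟩ := Function.ne_iff.mp hs
    refine mem_filter.mpr ⟨mem_range.mpr ?_, hs⟩
    exact Nat.lt_succ_of_le (le_trans (Polynomial.le_natDegree_of_ne_zero (by simpa [hc] using hi))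
      (Finset.le_sup (f := fun i => (u i).natDegree) (mem_univ i)))
  have hlow : ∀ s, s < m → c s = 0 := by
    intro s hsm
    by_contra hne
    exact absurd (hmmin s (hmemT s hne)) (by omega)
  have hhigh : ∀ s, d < s → c s = 0 := by
    intro s hsd
    by_contra hne
    exact absurd (hdmax s (hmemT s hne)) (by omega)
  have hpart : ∀ s : ℕ,
      (univ.filter (fun j : Fin n =>
        (∑ i : Fin k, u i * (Polynomial.C (G0 i j) + Polynomial.C (G1 i j) * Polynomial.X)).coeff s
          = 0)).card
      + (univ.filter (fun j : Fin n =>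
        ¬ ((∑ i : Fin k, u i * (Polynomial.C (G0 i j) + Polynomial.C (G1 i j) * Polynomial.X)).coeff s
          = 0))).card = n := by
    intro s
    rw [Finset.card_filter, Finset.card_filter, ← Finset.sum_add_distrib]
    have hone : ∀ j : Fin n,
        ((if (∑ i : Fin k, u i * (Polynomial.C (G0 i j) + Polynomial.C (G1 i j) * Polynomial.X)).coeff s = 0 then 1 else 0)
          + if ¬ (∑ i : Fin k, u i * (Polynomial.C (G0 i j) + Polynomial.C (G1 i j) * Polynomial.X)).coeff s = 0 then 1 else 0) = 1 := by
      intro j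
      by_cases h : (∑ i : Fin k, u i * (Polynomial.C (G0 i j) + Polynomial.C (G1 i j) * Polynomial.X)).coeff s = 0
      · rw [if_pos h, if_neg (not_not_intro h)]
      · rw [if_neg h, if_pos h]
    rw [Finset.sum_congr rfl (fun j _ => hone j)]
    simp
  have hvm : ∀ j : Fin n,
      (∑ i : Fin k, u i * (Polynomial.C (G0 i j) + Polynomial.C (G1 i j) * Polynomial.X)).coeff m
      = ∑ i, c m i * G0 i j := by
    intro j
    rcases Nat.eq_zero_or_pos m with h0 | hpos
    · rw [h0]; exact hvco0 j
    · obtain ⟨s, rfl⟩ : ∃ s, m = s + 1 := ⟨m - 1, by omega⟩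
      rw [hvcoS]
      have hzlow : c s = 0 := hlow s (by omega)
      rw [hzlow]
      simp
  have hvd1 : ∀ j : Fin n,
      (∑ i : Fin k, u i * (Polynomial.C (G0 i j) + Polynomial.C (G1 i j) * Polynomial.X)).coeff (d + 1)
      = ∑ i, c d i * G1 i j := by
    intro j
    rw [hvcoS]
    have hzhigh : c (d + 1) = 0 := hhigh _ (by omega)
    rw [hzhigh]
    simp
  rcases eq_or_lt_of_le hmd with heq | hlt
  · -- m = d : use the concatenated matrix [G0 | G1]
    subst heq
    set SZ : Finset (Fin 2 × Fin n) := univ.filter (fun q : Fin 2 × Fin n =>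
      (∑ i, c m i * (if q.1 = 0 then G0 i q.2 else G1 i q.2)) = 0) with hSZ
    have hSZcard : SZ.card + 1 ≤ k := by
      by_contra h
      push_neg at h
      have hkle : k ≤ SZ.card := by omega
      refine hcm (kill (Matrix.of fun (i : Fin k) (q : Fin 2 × Fin n) =>
        if q.1 = 0 then G0 i q.2 else G1 i q.2) hcat (c m) SZ (by simpa using hkle) ?_)
      intro q hq
      simpa using (mem_filter.mp hq).2
    have hsplit := card_split SZ
    have e0 : (univ.filter fun j : Fin n => ((0 : Fin 2), j) ∈ SZ).card
        = (univ.filter (fun j : Fin n =>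
          (∑ i : Fin k, u i * (Polynomial.C (G0 i j) + Polynomial.C (G1 i j) * Polynomial.X)).coeff m
            = 0)).card := by
      congr 1
      apply Finset.filter_congr
      intro j _
      rw [hvm j]
      simp [hSZ]
    have e1 : (univ.filter fun j : Fin n => ((1 : Fin 2), j) ∈ SZ).card
        = (univ.filter (fun j : Fin n =>
          (∑ i : Fin k, u i * (Polynomial.C (G0 i j) + Polynomial.C (G1 i j) * Polynomial.X)).coeff (m + 1)
            = 0)).card := by
      congr 1
      apply Finset.filter_congr
      intro j _
      rw [hvd1 j]
      simp [hSZ]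
    have hcnt : (univ.filter (fun j : Fin n =>
        ¬ ((∑ i : Fin k, u i * (Polynomial.C (G0 i j) + Polynomial.C (G1 i j) * Polynomial.X)).coeff m
          = 0))).card
        + (univ.filter (fun j : Fin n =>
        ¬ ((∑ i : Fin k, u i * (Polynomial.C (G0 i j) + Polynomial.C (G1 i j) * Polynomial.X)).coeff (m + 1)
          = 0))).card
        ≤ ∑ j : Fin n,
          (∑ i : Fin k, u i * (Polynomial.C (G0 i j) + Polynomial.C (G1 i j) * Polynomial.X)).support.card := by
      have h := sum_support_ge (fun j : Fin n =>
        ∑ i : Fin k, u i * (Polynomial.C (G0 i j) + Polynomial.C (G1 i j) * Polynomial.X)) {m, m + 1}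
      rw [Finset.sum_pair (by omega : m ≠ m + 1)] at h
      exact h
    have hp1 := hpart m
    have hp2 := hpart (m + 1)
    omega
  · -- m < d
    have hvm1 : ∀ j : Fin n,
        (∑ i : Fin k, u i * (Polynomial.C (G0 i j) + Polynomial.C (G1 i j) * Polynomial.X)).coeff (m + 1)
        = ∑ i, (c m i * G1 i j + c (m + 1) i * G0 i j) := by
      intro j
      rw [hvcoS, ← Finset.sum_add_distrib]
      refine Finset.sum_congr rfl (fun i _ => ?_)
      ring
    have hpl := pairLemma hk hkn G0 G1 hG0 hG1 hM1 (c m) (c (m + 1)) hcm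
    have e1 : (univ.filter fun s : Fin n => (∑ i, c m i * G0 i s) = 0).card
        = (univ.filter (fun j : Fin n =>
          (∑ i : Fin k, u i * (Polynomial.C (G0 i j) + Polynomial.C (G1 i j) * Polynomial.X)).coeff m
            = 0)).card := by
      congr 1
      apply Finset.filter_congr
      intro j _
      rw [hvm j]
    have e2 : (univ.filter fun s : Fin n =>
        (∑ i, (c m i * G1 i s + c (m + 1) i * G0 i s)) = 0).card
        = (univ.filter (fun j : Fin n =>
          (∑ i : Fin k, u i * (Polynomial.C (G0 i j) + Polynomial.C (G1 i j) * Polynomial.X)).coeff (m + 1)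
            = 0)).card := by
      congr 1
      apply Finset.filter_congr
      intro j _
      rw [hvm1 j]
    have hz3 : (univ.filter (fun j : Fin n => (∑ i, c d i * G1 i j) = 0)).card + 1 ≤ k := by
      by_contra h
      push_neg at h
      have hkle : k ≤ (univ.filter (fun j : Fin n => (∑ i, c d i * G1 i j) = 0)).card := by omega
      exact hcd (kill G1 hG1 (c d) _ (by simpa using hkle) (fun s hs => (mem_filter.mp hs).2))
    have e3 : (univ.filter (fun j : Fin n => (∑ i, c d i * G1 i j) = 0)).card
        = (univ.filter (fun j : Fin n =>
          (∑ i : Fin k, u i * (Polynomial.C (G0 i j) + Polynomial.C (G1 i j) * Polynomial.X)).coeff (d + 1)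
            = 0)).card := by
      congr 1
      apply Finset.filter_congr
      intro j _
      rw [hvd1 j]
    have hcnt : (univ.filter (fun j : Fin n =>
        ¬ ((∑ i : Fin k, u i * (Polynomial.C (G0 i j) + Polynomial.C (G1 i j) * Polynomial.X)).coeff m
          = 0))).card
        + ((univ.filter (fun j : Fin n =>
        ¬ ((∑ i : Fin k, u i * (Polynomial.C (G0 i j) + Polynomial.C (G1 i j) * Polynomial.X)).coeff (m + 1)
          = 0))).card
        + (univ.filter (fun j : Fin n =>
        ¬ ((∑ i : Fin k, u i * (Polynomial.C (G0 i j) + Polynomial.C (G1 i j) * Polynomial.X)).coeff (d + 1)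
          = 0))).card)
        ≤ ∑ j : Fin n,
          (∑ i : Fin k, u i * (Polynomial.C (G0 i j) + Polynomial.C (G1 i j) * Polynomial.X)).support.card := by
      have h := sum_support_ge (fun j : Fin n =>
        ∑ i : Fin k, u i * (Polynomial.C (G0 i j) + Polynomial.C (G1 i j) * Polynomial.X)) {m, m + 1, d + 1}
      rw [show ({m, m + 1, d + 1} : Finset ℕ) = insert m (insert (m + 1) {d + 1}) from rfl,
        Finset.sum_insert (by simp; omega), Finset.sum_insert (by simp; omega),
        Finset.sum_singleton] at h
      exact h
    have hp1 := hpart m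
    have hp2 := hpart (m + 1)
    have hp3 := hpart (d + 1)
    rw [e1, e2] at hpl
    rw [e3] at hz3
    omega
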